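/- arXiv:1106.5288 — 6 statements merged into one kernel-verified Lean document; each statement's English description precedes it below -/
import Mathlib

section
/- The relation → on almost malnormal collections of infinite subgroups of a group G, defined by 𝓚 → 𝓗 iff every member of 𝓚 is contained in some member of 𝓗, is reflexive, transitive, and antisymmetric; i.e., it is a partial order. -/
open scoped Pointwise

/-- The conjugate subgroup `g H g⁻¹`. -/
def conjSub {G : Type*} [Group G] (g : G) (H : Subgroup G) : Subgroup G :=
  H.map (MulAut.conj g).toMonoidHom

/-- A collection of subgroups is almost malnormal if all members are infinite,
any two distinct members intersect in a finite set, and every member equals its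
normalizer. -/
def AMColl {G : Type*} [Group G] (S : Set (Subgroup G)) : Prop :=
  (∀ H ∈ S, (H : Set G).Infinite) ∧
  (∀ H₁ ∈ S, ∀ H₂ ∈ S, H₁ ≠ H₂ → ((H₁ : Set G) ∩ (H₂ : Set G)).Finite) ∧
  (∀ H ∈ S, Subgroup.normalizer (H : Set G) = H)

/-- Conjugacy invariance of a collection of subgroups. -/
def ConjInv {G : Type*} [Group G] (S : Set (Subgroup G)) : Prop :=
  ∀ H ∈ S, ∀ g : G, conjSub g H ∈ S

/-- `BlowRel 𝓚 𝓗` (written `𝓚 → 𝓗` in the paper): every member of `𝓚` is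
contained in some member of `𝓗`. -/
def BlowRel {G : Type*} [Group G] (K H : Set (Subgroup G)) : Prop :=
  ∀ P ∈ K, ∃ Q ∈ H, P ≤ Q

namespace AMColl

variable {G : Type*} [Group G] {S : Set (Subgroup G)}

/-- Otherwise the smaller member, being infinite, would be the finite intersection of two
distinct members. -/
theorem eq_of_le (hS : AMColl S) {P Q : Subgroup G} (hP : P ∈ S) (hQ : Q ∈ S) (hPQ : P ≤ Q) :
    P = Q := by
  by_contra hne
  have hinter : (P : Set G) ∩ Q = P := Set.inter_eq_self_of_subset_left hPQ
  exact hS.1 P hP (hinter ▸ hS.2.1 P hP Q hQ hne)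

end AMColl

namespace BlowRel

variable {G : Type*} [Group G] {𝓚 𝓗 𝓛 : Set (Subgroup G)}

theorem refl (𝓗 : Set (Subgroup G)) : BlowRel 𝓗 𝓗 :=
  fun P hP => ⟨P, hP, le_rfl⟩

theorem trans (h₁ : BlowRel 𝓚 𝓗) (h₂ : BlowRel 𝓗 𝓛) : BlowRel 𝓚 𝓛 := by
  intro P hP
  obtain ⟨Q, hQ, hPQ⟩ := h₁ P hP
  obtain ⟨R, hR, hQR⟩ := h₂ Q hQ
  exact ⟨R, hR, hPQ.trans hQR⟩

theorem subset_of_blowRel (hK : AMColl 𝓚) (h₁ : BlowRel 𝓚 𝓗) (h₂ : BlowRel 𝓗 𝓚) : 𝓚 ⊆ 𝓗 := by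
  intro P hP
  obtain ⟨Q, hQ, hPQ⟩ := h₁ P hP
  obtain ⟨P', hP', hQP'⟩ := h₂ Q hQ
  have hPP' : P = P' := hK.eq_of_le hP hP' (hPQ.trans hQP')
  have hQP : Q = P := le_antisymm (hPP' ▸ hQP') hPQ
  exact hQP ▸ hQ

theorem antisymm (hK : AMColl 𝓚) (hH : AMColl 𝓗) (h₁ : BlowRel 𝓚 𝓗) (h₂ : BlowRel 𝓗 𝓚) :
    𝓚 = 𝓗 :=
  (subset_of_blowRel hK h₁ h₂).antisymm (subset_of_blowRel hH h₂ h₁)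

end BlowRel

theorem stmt_1 {G : Type*} [Group G] :
    (∀ 𝓗 : Set (Subgroup G), AMColl 𝓗 → BlowRel 𝓗 𝓗) ∧
    (∀ 𝓚 𝓗 𝓛 : Set (Subgroup G), AMColl 𝓚 → AMColl 𝓗 → AMColl 𝓛 →
      BlowRel 𝓚 𝓗 → BlowRel 𝓗 𝓛 → BlowRel 𝓚 𝓛) ∧
    (∀ 𝓚 𝓗 : Set (Subgroup G), AMColl 𝓚 → AMColl 𝓗 →
      BlowRel 𝓚 𝓗 → BlowRel 𝓗 𝓚 → 𝓚 = 𝓗) :=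
  ⟨fun 𝓗 _ => BlowRel.refl 𝓗,
    fun _ _ _ _ _ _ h₁ h₂ => h₁.trans h₂,
    fun _ _ hK hH h₁ h₂ => BlowRel.antisymm hK hH h₁ h₂⟩
end

section
/- Let L be a group and M an infinite subgroup of L such that the virtual normalizer V_L(M) is virtually infinite cyclic. Then V_L(V_L(M)) = V_L(M). -/
open scoped Pointwise

/-- The virtual normalizer (commensurator) of a subgroup `M` of `L`:
all `g ∈ L` such that `M ∩ gMg⁻¹` has finite index in both `M` and `gMg⁻¹`. -/
def virtNormalizer {L : Type*} [Group L] (M : Subgroup L) : Subgroup L :=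
  Subgroup.Commensurable.commensurator M

/-- A group is virtually infinite cyclic if it contains an element of infinite
order whose cyclic subgroup has finite index. -/
def VirtuallyInfCyclic (G : Type*) [Group G] : Prop :=
  ∃ g : G, ¬ IsOfFinOrder g ∧ (Subgroup.zpowers g).FiniteIndex

/-!
An infinite subgroup `K` of a virtually cyclic group has finite index: two of its elements lie in
the same coset of the finite-index cyclic subgroup `⟨g⟩`, so `K` contains some `g ^ n` with
`n ≠ 0`, and `⟨g ^ n⟩` has finite index in `⟨g⟩`. Applied to `M` inside `V_L(M)`, which contains
`M`, this makes `M` commensurable with `V_L(M)`, and commensurable subgroups have the same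
commensurator.
-/

namespace Subgroup

variable {G : Type*} [Group G]

theorem normalizer_le_commensurator (H : Subgroup G) :
    normalizer (H : Set G) ≤ Commensurable.commensurator H := fun _ hg => by
  rw [Commensurable.commensurator_mem_iff, conjAct_pointwise_smul_eq_self hg]

theorem le_commensurator (H : Subgroup G) : H ≤ Commensurable.commensurator H :=
  le_normalizer.trans (normalizer_le_commensurator H)

theorem Commensurable.of_le {H K : Subgroup G} (hHK : H ≤ K) (hi : H.relIndex K ≠ 0) :
    Commensurable H K :=
  ⟨hi, by simp [relIndex_eq_one.mpr hHK]⟩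

theorem relIndex_zpowers_zpow_ne_zero (g : G) {n : ℤ} (hn : n ≠ 0) :
    (zpowers (g ^ n)).relIndex (zpowers g) ≠ 0 := by
  have hle : AddSubgroup.toSubgroup (AddSubgroup.zmultiples n) ≤
      (zpowers (g ^ n)).comap (zpowersHom G g) := by
    rintro k ⟨m, rfl⟩
    exact ⟨m, by simp [← zpow_mul, mul_comm]; rfl⟩
  have : (AddSubgroup.toSubgroup (AddSubgroup.zmultiples n)).FiniteIndex :=
    ⟨by simpa [AddSubgroup.index_toSubgroup, Int.index_zmultiples] using hn⟩
  have hcomap := index_comap (zpowers (g ^ n)) (zpowersHom G g)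
  rw [range_zpowersHom] at hcomap
  rw [← hcomap]
  exact (finiteIndex_of_le hle).index_ne_zero

theorem exists_zpow_mem_of_infinite {g : G} [(zpowers g).FiniteIndex] (K : Subgroup G)
    [Infinite K] : ∃ n : ℤ, n ≠ 0 ∧ g ^ n ∈ K := by
  obtain ⟨k₁, k₂, hne, hcoset⟩ :=
    Finite.exists_ne_map_eq_of_infinite fun k : K => ((k : G) : G ⧸ zpowers g)
  obtain ⟨n, hn⟩ := mem_zpowers_iff.mp (QuotientGroup.eq.mp hcoset)
  refine ⟨n, ?_, hn ▸ K.mul_mem (K.inv_mem k₁.2) k₂.2⟩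
  rintro rfl
  exact hne (Subtype.ext (inv_mul_eq_one.mp (by simpa using hn.symm)))

theorem finiteIndex_of_infinite_of_zpowers_finiteIndex {g : G} [(zpowers g).FiniteIndex]
    (K : Subgroup G) [Infinite K] : K.FiniteIndex := by
  obtain ⟨n, hn, hgn⟩ := exists_zpow_mem_of_infinite (g := g) K
  have : (zpowers (g ^ n)).FiniteIndex := ⟨by
    rw [← relIndex_mul_index (zpowers_le.mpr (zpow_mem_zpowers g n))]
    exact mul_ne_zero (relIndex_zpowers_zpow_ne_zero g hn) FiniteIndex.index_ne_zero⟩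
  exact finiteIndex_of_le (zpowers_le.mpr hgn)

end Subgroup

open Subgroup in
theorem stmt_4 {L : Type*} [Group L] (M : Subgroup L)
    (hM : (M : Set L).Infinite)
    (hvc : VirtuallyInfCyclic (virtNormalizer M)) :
    virtNormalizer (virtNormalizer M) = virtNormalizer M := by
  obtain ⟨g, -, hg⟩ := hvc
  have hle : M ≤ virtNormalizer M := le_commensurator M
  have : Infinite (M.subgroupOf (virtNormalizer M)) :=
    (subgroupOfEquivOfLe hle).toEquiv.infinite_iff.mpr hM.to_subtype
  have hfin := finiteIndex_of_infinite_of_zpowers_finiteIndex (g := g) (M.subgroupOf _)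
  exact (Commensurable.of_le hle hfin.index_ne_zero).eq.symm
end

section
/- Let M be an infinite subgroup of a group L. If g ∈ V_L(V_L(M)), i.e., V_L(M) ∩ gV_L(M)g⁻¹ has finite index in both V_L(M) and gV_L(M)g⁻¹, and M has finite index in V_L(M), then M ∩ gMg⁻¹ has finite index in both M and gMg⁻¹, so g ∈ V_L(M). -/
open scoped Pointwise

/-! Since `M ≤ V_L(M)` with finite index, `M` and `V_L(M)` are commensurable, and the
commensurator only depends on the commensurability class; hence `V_L(V_L(M)) = V_L(M)`. -/

open Subgroup

theorem conjSub_eq_toConjAct_smul {G : Type*} [Group G] (g : G) (H : Subgroup G) :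
    conjSub g H = ConjAct.toConjAct g • H :=
  rfl

theorem mem_virtNormalizer_iff {L : Type*} [Group L] {M : Subgroup L} {g : L} :
    g ∈ virtNormalizer M ↔ Commensurable (conjSub g M) M :=
  Commensurable.commensurator_mem_iff M g

theorem le_virtNormalizer {L : Type*} [Group L] (M : Subgroup L) : M ≤ virtNormalizer M :=
  fun _ hm => mem_virtNormalizer_iff.2 <| by
    rw [conjSub_eq_toConjAct_smul, conjAct_pointwise_smul_eq_self (le_normalizer hm)]

theorem commensurable_virtNormalizer {L : Type*} [Group L] {M : Subgroup L}
    (hfi : M.relIndex (virtNormalizer M) ≠ 0) : Commensurable M (virtNormalizer M) :=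
  ⟨hfi, by simp [relIndex_eq_one.2 (le_virtNormalizer M)]⟩

theorem virtNormalizer_virtNormalizer {L : Type*} [Group L] {M : Subgroup L}
    (hfi : M.relIndex (virtNormalizer M) ≠ 0) :
    virtNormalizer (virtNormalizer M) = virtNormalizer M :=
  (Commensurable.eq (commensurable_virtNormalizer hfi)).symm

theorem stmt_6_general {L : Type*} [Group L] (M : Subgroup L)
    (hfi : M.relIndex (virtNormalizer M) ≠ 0)
    (g : L) (hg : g ∈ virtNormalizer (virtNormalizer M)) :
    (conjSub g M).relIndex M ≠ 0 ∧ M.relIndex (conjSub g M) ≠ 0 ∧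
      g ∈ virtNormalizer M := by
  rw [virtNormalizer_virtNormalizer hfi] at hg
  obtain ⟨hleft, hright⟩ := mem_virtNormalizer_iff.1 hg
  exact ⟨hleft, hright, hg⟩

theorem stmt_6 {L : Type*} [Group L] (M : Subgroup L)
    (hM : (M : Set L).Infinite)
    (hfi : M.relIndex (virtNormalizer M) ≠ 0)
    (g : L) (hg : g ∈ virtNormalizer (virtNormalizer M)) :
    (conjSub g M).relIndex M ≠ 0 ∧ M.relIndex (conjSub g M) ≠ 0 ∧
      g ∈ virtNormalizer M :=
  stmt_6_general M hfi g hg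
end

section
/- Let 𝓚 and 𝓗 be almost malnormal conjugacy-invariant collections of infinite subgroups of a group G with 𝓚 → 𝓗 (every member of 𝓚 is contained in some member of 𝓗). Let {H_λ | λ ∈ Λ} be a set of representatives of conjugacy classes of 𝓗, and for each λ let {K_{λ,μ} | μ ∈ M_λ} be a set of representatives of the H_λ-conjugacy classes of the members of 𝓚 contained in H_λ. If g K_{λ,μ} g⁻¹ = K_{λ',μ'} for some g ∈ G, then λ = λ', μ = μ', and g ∈ K_{λ,μ}. -/
open scoped Pointwise

/-! Two members of an almost malnormal collection sharing an infinite subgroup coincide, and a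
member is conjugated to itself only by its own elements. Applied first to `𝓗`, this forces
`g H_λ g⁻¹ = H_λ'`, hence `λ = λ'` and `g ∈ H_λ`; applied then to `𝓚`, it gives `μ = μ'` and
`g ∈ K_{λ,μ}`. -/

section

variable {G : Type*} [Group G]

lemma conjSub_mono (g : G) {A B : Subgroup G} (h : A ≤ B) : conjSub g A ≤ conjSub g B :=
  Subgroup.map_mono h

lemma conjSub_eq_self_iff {g : G} {H : Subgroup G} :
    conjSub g H = H ↔ g ∈ Subgroup.normalizer (H : Set G) :=
  Subgroup.mem_normalizer_iff_map_conj_eq.symm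

namespace AMColl

variable {S : Set (Subgroup G)}

lemma eq_of_infinite_le (hS : AMColl S) {A B : Subgroup G} (hA : A ∈ S) (hB : B ∈ S)
    {P : Subgroup G} (hP : (P : Set G).Infinite) (hPA : P ≤ A) (hPB : P ≤ B) : A = B := by
  by_contra hne
  exact hP ((hS.2.1 A hA B hB hne).subset fun _ hx => ⟨hPA hx, hPB hx⟩)

lemma mem_of_conjSub_eq_self (hS : AMColl S) {H : Subgroup G} (hH : H ∈ S) {g : G}
    (hg : conjSub g H = H) : g ∈ H := by
  rw [← hS.2.2 H hH]
  exact conjSub_eq_self_iff.mp hg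

end AMColl

end

theorem stmt_8_general {G : Type*} [Group G] {𝓚 𝓗 : Set (Subgroup G)}
    (hK : AMColl 𝓚) (hH : AMColl 𝓗) (hHinv : ConjInv 𝓗)
    {Λ : Type*} (H : Λ → Subgroup G)
    (hHmem : ∀ l, H l ∈ 𝓗)
    (hHdist : ∀ l l' : Λ, ∀ g : G, conjSub g (H l) = H l' → l = l')
    {Mi : Λ → Type*} (K : ∀ l, Mi l → Subgroup G)
    (hKmem : ∀ l m, K l m ∈ 𝓚)
    (hKle : ∀ l m, K l m ≤ H l)
    (hKdist : ∀ l, ∀ m m' : Mi l, ∀ h ∈ H l, conjSub h (K l m) = K l m' → m = m')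
    {l l' : Λ} {m : Mi l} {m' : Mi l'} {g : G}
    (hconj : conjSub g (K l m) = K l' m') :
    l = l' ∧ HEq m m' ∧ g ∈ K l m := by
  have hconjH : conjSub g (H l) = H l' :=
    hH.eq_of_infinite_le (hHinv _ (hHmem l) g) (hHmem l') (hK.1 _ (hKmem l' m'))
      (hconj ▸ conjSub_mono g (hKle l m)) (hKle l' m')
  obtain rfl : l = l' := hHdist l l' g hconjH
  have hgH : g ∈ H l := hH.mem_of_conjSub_eq_self (hHmem l) hconjH
  obtain rfl : m = m' := hKdist l m m' g hgH hconj
  exact ⟨rfl, HEq.rfl, hK.mem_of_conjSub_eq_self (hKmem l m) hconj⟩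

theorem stmt_8 {G : Type*} [Group G] {𝓚 𝓗 : Set (Subgroup G)}
    (hK : AMColl 𝓚) (hH : AMColl 𝓗) (hKinv : ConjInv 𝓚) (hHinv : ConjInv 𝓗)
    (hrel : BlowRel 𝓚 𝓗)
    {Λ : Type*} (H : Λ → Subgroup G)
    (hHmem : ∀ l, H l ∈ 𝓗)
    (hHrep : ∀ P ∈ 𝓗, ∃ l, ∃ g : G, conjSub g (H l) = P)
    (hHdist : ∀ l l' : Λ, ∀ g : G, conjSub g (H l) = H l' → l = l')
    {Mi : Λ → Type*} (K : ∀ l, Mi l → Subgroup G)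
    (hKmem : ∀ l m, K l m ∈ 𝓚)
    (hKle : ∀ l m, K l m ≤ H l)
    (hKrep : ∀ l, ∀ P ∈ 𝓚, P ≤ H l → ∃ m, ∃ h ∈ H l, conjSub h (K l m) = P)
    (hKdist : ∀ l, ∀ m m' : Mi l, ∀ h ∈ H l, conjSub h (K l m) = K l m' → m = m')
    {l l' : Λ} {m : Mi l} {m' : Mi l'} {g : G}
    (hconj : conjSub g (K l m) = K l' m') :
    l = l' ∧ HEq m m' ∧ g ∈ K l m :=
  stmt_8_general hK hH hHinv H hHmem hHdist K hKmem hKle hKdist hconj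
end

section
/- Let G be a virtually infinite cyclic group and K its maximal finite normal subgroup. Then G/K is isomorphic to ℤ or to the infinite dihedral group ℤ/2 * ℤ/2. -/
open scoped Pointwise

/-!
Since `K` is the largest finite normal subgroup, `Q = G ⧸ K` has no nontrivial finite normal
subgroup, and it is still virtually infinite cyclic. The normal core of a finite-index infinite
cyclic subgroup is a normal infinite cyclic subgroup `⟨a⟩` of finite index, and every `q : Q`
conjugates `a` to `a` or `a⁻¹`; so the centralizer `C` of `a` is normal of index at most two.
In `C` the subgroup `⟨a⟩` is central of finite index, so the transfer `C → ⟨a⟩` is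
`x ↦ x ^ n`. Its kernel is a torsion subgroup that is normal in `Q`, and meets `⟨a⟩` trivially,
hence is finite and so trivial: `C` embeds in `⟨a⟩` and is infinite cyclic, `C = ⟨c⟩`.
If `C = Q` then `Q ≅ ℤ`; otherwise any `t ∉ C` inverts `c`, squares to `1`, and `Q = ⟨c⟩ ⊔ t⟨c⟩`
is the infinite dihedral group.
-/

open Subgroup

namespace QuotientGroup

variable {G : Type*} [Group G] {K : Subgroup G}

theorem finite_preimage_mk (hK : (K : Set G).Finite) {s : Set (G ⧸ K)} (hs : s.Finite) :
    (((↑) : G → G ⧸ K) ⁻¹' s).Finite := by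
  refine hs.preimage' fun q _ => ?_
  induction q using QuotientGroup.induction_on with | H x => ?_
  rw [← Set.image_singleton, preimage_image_mk_eq_mul]
  exact (Set.finite_singleton x).mul hK

theorem not_isOfFinOrder_mk [K.Normal] (hK : (K : Set G).Finite) {g : G} (hg : ¬IsOfFinOrder g) :
    ¬IsOfFinOrder (g : G ⧸ K) := by
  rw [← infinite_zpowers] at hg ⊢
  refine fun hfin => hg ((finite_preimage_mk hK hfin).subset ?_)
  rintro _ ⟨k, rfl⟩
  exact ⟨k, by simp⟩

theorem eq_bot_of_normal_of_finite [K.Normal] (hK : (K : Set G).Finite)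
    (hKmax : ∀ K' : Subgroup G, K'.Normal → (K' : Set G).Finite → K' ≤ K)
    (L : Subgroup (G ⧸ K)) [L.Normal] (hL : (L : Set (G ⧸ K)).Finite) : L = ⊥ := by
  have hle : L.comap (mk' K) ≤ K := hKmax _ inferInstance (finite_preimage_mk hK hL)
  refine eq_bot_iff.mpr fun q hq => ?_
  induction q using QuotientGroup.induction_on with | H x => ?_
  exact (eq_one_iff x).mpr (hle hq)

theorem finiteIndex_zpowers_mk [K.Normal] {g : G} [(zpowers g).FiniteIndex] :
    (zpowers (g : G ⧸ K)).FiniteIndex := by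
  rw [← coe_mk', ← MonoidHom.map_zpowers]
  exact ⟨ne_zero_of_dvd_ne_zero FiniteIndex.index_ne_zero (index_map_dvd _ (mk'_surjective K))⟩

end QuotientGroup

section VirtuallyCyclic

variable {Q : Type*} [Group Q] {a : Q}

theorem isOfFinOrder_zpow_iff {k : ℤ} : IsOfFinOrder (a ^ k) ↔ IsOfFinOrder a ∨ k = 0 := by
  obtain ⟨n, rfl | rfl⟩ := Int.eq_nat_or_neg k <;> simp [isOfFinOrder_pow]

theorem exists_zpowers_normal_finiteIndex {g : Q} (hg : ¬IsOfFinOrder g)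
    [(zpowers g).FiniteIndex] :
    ∃ a : Q, ¬IsOfFinOrder a ∧ (zpowers a).Normal ∧ (zpowers a).FiniteIndex := by
  obtain ⟨a, ha⟩ := ((zpowers g).normalCore.isCyclic_iff_exists_zpowers_eq_top).mp
    (isCyclic_of_le (normalCore_le _))
  refine ⟨a, fun hfin => hg ?_, ha ▸ normalCore_normal _, by rw [ha]; infer_instance⟩
  have hgN : g ^ (zpowers g).normalCore.index ∈ zpowers a := by
    rw [ha]; exact pow_index_mem _ g
  obtain ⟨k, hk⟩ := mem_zpowers_iff.mp hgN
  exact (hk ▸ hfin.zpow).of_pow FiniteIndex.index_ne_zero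

section
variable (hN : (zpowers a).Normal) (ha : ¬IsOfFinOrder a)
include hN ha

theorem conj_eq_self_or_eq_inv (q : Q) : q * a * q⁻¹ = a ∨ q * a * q⁻¹ = a⁻¹ := by
  obtain ⟨m, hm⟩ := mem_zpowers_iff.mp (hN.conj_mem a (mem_zpowers a) q)
  obtain ⟨n, hn⟩ := mem_zpowers_iff.mp (hN.conj_mem a (mem_zpowers a) q⁻¹)
  have hnm : a ^ (n * m) = a ^ (1 : ℤ) := by
    rw [zpow_mul, hn, conj_zpow, hm]
    group
  rcases Int.eq_one_or_neg_one_of_mul_eq_one'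
      (injective_zpow_iff_not_isOfFinOrder.mpr ha hnm) with ⟨-, rfl⟩ | ⟨-, rfl⟩
  · exact Or.inl (by rw [← hm, zpow_one])
  · exact Or.inr (by rw [← hm, zpow_neg_one])

theorem conj_eq_inv_of_not_mem_centralizer {q : Q} (hq : q ∉ centralizer {a}) :
    q * a * q⁻¹ = a⁻¹ := by
  refine (conj_eq_self_or_eq_inv hN ha q).resolve_left fun h => hq ?_
  rw [mem_centralizer_singleton_iff]
  exact mul_inv_eq_iff_eq_mul.mp h

theorem normal_centralizer : (centralizer {a}).Normal := by
  refine ⟨fun x hx q => ?_⟩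
  rw [mem_centralizer_singleton_iff] at hx ⊢
  have hcomm : Commute x (q⁻¹ * a * q) := by
    rcases conj_eq_self_or_eq_inv hN ha q⁻¹ with h | h <;> rw [inv_inv] at h <;> rw [h]
    exacts [hx, Commute.inv_right hx]
  calc q * x * q⁻¹ * a = q * (x * (q⁻¹ * a * q)) * q⁻¹ := by group
    _ = q * (q⁻¹ * a * q * x) * q⁻¹ := by rw [hcomm.eq]
    _ = a * (q * x * q⁻¹) := by group

theorem inv_mul_mem_centralizer {x y : Q} (hx : x ∉ centralizer {a}) (hy : y ∉ centralizer {a}) :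
    x⁻¹ * y ∈ centralizer {a} := by
  rw [mem_centralizer_singleton_iff, ← mul_inv_eq_iff_eq_mul]
  calc (x⁻¹ * y) * a * (x⁻¹ * y)⁻¹ = x⁻¹ * (y * a * y⁻¹) * x := by group
    _ = x⁻¹ * (x * a * x⁻¹) * x := by
        rw [conj_eq_inv_of_not_mem_centralizer hN ha hx, conj_eq_inv_of_not_mem_centralizer hN ha hy]
    _ = a := by group
end

section
variable (htriv : ∀ L : Subgroup Q, L.Normal → (L : Set Q).Finite → L = ⊥)
  (ha : ¬IsOfFinOrder a) [(zpowers a).FiniteIndex]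
include htriv ha

theorem eq_bot_of_forall_isOfFinOrder (T : Subgroup Q) [T.Normal]
    (hT : ∀ x ∈ T, IsOfFinOrder x) : T = ⊥ := by
  have : Finite T := by
    refine Finite.of_injective (fun x : T => ((x : Q) : Q ⧸ zpowers a)) fun x y hxy => ?_
    obtain ⟨k, hk⟩ := mem_zpowers_iff.mp (QuotientGroup.eq.mp hxy)
    have hk0 : k = 0 :=
      (isOfFinOrder_zpow_iff.mp (hk ▸ hT _ (T.mul_mem (T.inv_mem x.2) y.2))).resolve_left ha
    rw [hk0, zpow_zero] at hk
    exact Subtype.ext (inv_mul_eq_one.mp hk.symm)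
  exact htriv T ‹_› (Set.toFinite _)

theorem injective_of_apply_eq_one_iff {C : Subgroup Q} [C.Normal] {M : Type*} [Group M]
    (f : C →* M) {n : ℕ} (hn : n ≠ 0) (hf : ∀ x, f x = 1 ↔ (x : Q) ^ n = 1) :
    Function.Injective f := by
  have : (f.ker.map C.subtype).Normal := by
    refine ⟨?_⟩
    rintro _ ⟨x, hx, rfl⟩ q
    refine ⟨⟨q * x * q⁻¹, Normal.conj_mem ‹_› _ x.2 q⟩, (hf _).mpr ?_, rfl⟩
    rw [conj_pow, (hf x).mp hx, mul_one, mul_inv_cancel]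
  rw [← MonoidHom.ker_eq_bot_iff, ← map_eq_bot_iff_of_injective _ C.subtype_injective]
  refine eq_bot_of_forall_isOfFinOrder htriv ha _ ?_
  rintro _ ⟨x, hx, rfl⟩
  exact isOfFinOrder_iff_pow_eq_one.mpr ⟨n, Nat.pos_of_ne_zero hn, (hf x).mp hx⟩

open scoped IsMulCommutative in
theorem isCyclic_centralizer (hN : (zpowers a).Normal) : IsCyclic (centralizer {a}) := by
  have := normal_centralizer hN ha
  have hle : zpowers a ≤ centralizer {a} :=
    zpowers_le.mpr (mem_centralizer_singleton_iff.mpr rfl)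
  set H := (zpowers a).subgroupOf (centralizer {a})
  let ϕ : H →* zpowers a := (subgroupOfEquivOfLe hle).toMonoidHom
  have hϕ (x : centralizer {a}) : (ϕ.transfer x : Q) = x ^ H.index := by
    rw [MonoidHom.transfer_eq_pow ϕ x]
    · rfl
    intro k g₀ hk
    have hcomm : Commute (g₀⁻¹ * x ^ k * g₀) g₀ := by
      obtain ⟨j, hj⟩ := mem_zpowers_iff.mp (mem_subgroupOf.mp hk)
      refine Subtype.ext ?_
      simp only [coe_mul, ← hj]
      exact (Commute.zpow_left (Commute.symm (mem_centralizer_singleton_iff.mp g₀.2)) j).eq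
    rw [← mul_left_inj g₀, hcomm.eq]
    group
  refine isCyclic_of_injective _ (injective_of_apply_eq_one_iff htriv ha ϕ.transfer
    (FiniteIndex.index_ne_zero (H := H)) fun x => ?_)
  rw [← OneMemClass.coe_eq_one, hϕ]

theorem exists_centralizer_eq_zpowers (hN : (zpowers a).Normal) :
    ∃ c : Q, ¬IsOfFinOrder c ∧ centralizer {a} = zpowers c := by
  obtain ⟨c, hc⟩ := ((centralizer {a}).isCyclic_iff_exists_zpowers_eq_top).mp
    (isCyclic_centralizer htriv ha hN)
  refine ⟨c, fun hfin => ha ?_, hc.symm⟩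
  obtain ⟨k, rfl⟩ := mem_zpowers_iff.mp (hc ▸ mem_centralizer_singleton_iff.mpr rfl)
  exact hfin.zpow
end

section
variable {c t : Q}

theorem conj_zpow_eq_zpow_neg (htc : t * c * t⁻¹ = c⁻¹) (i : ℤ) :
    t * c ^ i * t⁻¹ = c ^ (-i) := by
  rw [← conj_zpow, htc, inv_zpow, zpow_neg]

theorem mul_self_eq_one_of_conj_eq_inv (hc : ¬IsOfFinOrder c) (htc : t * c * t⁻¹ = c⁻¹)
    (ht2 : t * t ∈ zpowers c) : t * t = 1 := by
  obtain ⟨k, hk⟩ := mem_zpowers_iff.mp ht2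
  have hk0 : c ^ (-k) = c ^ k := by
    rw [← conj_zpow_eq_zpow_neg htc, hk]
    group
  rw [← hk, show k = 0 by linarith [injective_zpow_iff_not_isOfFinOrder.mpr hc hk0], zpow_zero]

theorem nonempty_mulEquiv_dihedralGroup_zero (hc : ¬IsOfFinOrder c) (ht2 : t * t = 1)
    (htc : t * c * t⁻¹ = c⁻¹) (ht : t ∉ zpowers c)
    (hcoset : ∀ x ∉ zpowers c, t⁻¹ * x ∈ zpowers c) : Nonempty (Q ≃* DihedralGroup 0) := by
  have htinv : t⁻¹ = t := inv_eq_of_mul_eq_one_right ht2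
  -- `ZMod 0` is `ℤ` by definition, so the indices of `DihedralGroup 0` serve as exponents.
  let f : DihedralGroup 0 →* Q := MonoidHom.mk' (fun
      | .r i => c ^ (show ℤ from i)
      | .sr i => t * c ^ (show ℤ from i)) (by
    rintro (i | i) (j | j) <;> revert i j <;> intro (i : ℤ) (j : ℤ)
    · exact zpow_add c i j
    · calc t * c ^ (j - i) = (t * c ^ (-i) * t⁻¹) * (t * c ^ j) := by
            rw [sub_eq_neg_add, zpow_add]; group
        _ = c ^ i * (t * c ^ j) := by rw [conj_zpow_eq_zpow_neg htc, neg_neg]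
    · show t * c ^ (i + j) = t * c ^ i * c ^ j
      rw [zpow_add, mul_assoc]
    · calc c ^ (j - i) = (t * c ^ i * t⁻¹) * c ^ j := by
            rw [conj_zpow_eq_zpow_neg htc, sub_eq_neg_add, zpow_add]
        _ = t * c ^ i * (t * c ^ j) := by rw [htinv]; group)
  have hinj : Function.Injective f := by
    refine (injective_iff_map_eq_one f).mpr ?_
    rintro (i | i) h
    · exact congrArg DihedralGroup.r
        (injective_zpow_iff_not_isOfFinOrder.mpr hc (h.trans (zpow_zero c).symm))
    · refine (ht ?_).elim
      rw [eq_inv_of_mul_eq_one_left h]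
      exact (zpowers c).inv_mem (zpow_mem_zpowers c _)
  have hsurj : Function.Surjective f := by
    intro x
    by_cases hx : x ∈ zpowers c
    · obtain ⟨k, hk⟩ := mem_zpowers_iff.mp hx
      exact ⟨.r k, hk⟩
    · obtain ⟨k, hk⟩ := mem_zpowers_iff.mp (hcoset x hx)
      exact ⟨.sr k, (congrArg (t * ·) hk).trans (mul_inv_cancel_left t x)⟩
  exact ⟨(MulEquiv.ofBijective f ⟨hinj, hsurj⟩).symm⟩
end

theorem nonempty_mulEquiv_int_or_dihedralGroup_zero
    (htriv : ∀ L : Subgroup Q, L.Normal → (L : Set Q).Finite → L = ⊥)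
    {g : Q} (hg : ¬IsOfFinOrder g) [(zpowers g).FiniteIndex] :
    Nonempty (Q ≃* Multiplicative ℤ) ∨ Nonempty (Q ≃* DihedralGroup 0) := by
  obtain ⟨a, ha, hN, hfi⟩ := exists_zpowers_normal_finiteIndex hg
  obtain ⟨c, hc, hC⟩ := exists_centralizer_eq_zpowers htriv ha hN
  by_cases htop : zpowers c = ⊤
  · have : Infinite Q := Set.infinite_univ_iff.mp (by simpa [htop] using infinite_zpowers.mpr hc)
    exact Or.inl ⟨(intEquivOfZPowersEqTop c htop).symm⟩
  obtain ⟨t, ht⟩ : ∃ t, t ∉ zpowers c := by simpa [eq_top_iff'] using htop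
  have hcoset : ∀ x ∉ zpowers c, t⁻¹ * x ∈ zpowers c := by
    rw [← hC] at ht ⊢
    exact fun x hx => inv_mul_mem_centralizer hN ha ht hx
  have htc : t * c * t⁻¹ = c⁻¹ := by
    have hNc : (zpowers c).Normal := hC ▸ normal_centralizer hN ha
    refine conj_eq_inv_of_not_mem_centralizer hNc hc fun htc => ht ?_
    obtain ⟨j, rfl⟩ := mem_zpowers_iff.mp (hC ▸ mem_centralizer_singleton_iff.mpr rfl)
    rw [← hC, mem_centralizer_singleton_iff]
    exact (Commute.zpow_right (mem_centralizer_singleton_iff.mp htc) j).eq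
  have ht2 : t * t = 1 := mul_self_eq_one_of_conj_eq_inv hc htc <| by
    by_contra h
    exact ht (by simpa using hcoset _ h)
  exact Or.inr (nonempty_mulEquiv_dihedralGroup_zero hc ht2 htc ht hcoset)

end VirtuallyCyclic

theorem stmt_10 {G : Type*} [Group G] (hvc : VirtuallyInfCyclic G)
    (K : Subgroup G) [K.Normal] (hKfin : (K : Set G).Finite)
    (hKmax : ∀ K' : Subgroup G, K'.Normal → (K' : Set G).Finite → K' ≤ K) :
    Nonempty ((G ⧸ K) ≃* Multiplicative ℤ) ∨
      Nonempty ((G ⧸ K) ≃* DihedralGroup 0) := by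
  obtain ⟨g, hg, hfi⟩ := hvc
  have := QuotientGroup.finiteIndex_zpowers_mk (K := K) (g := g)
  exact nonempty_mulEquiv_int_or_dihedralGroup_zero
    (QuotientGroup.eq_bot_of_normal_of_finite hKfin hKmax)
    (QuotientGroup.not_isOfFinOrder_mk hKfin hg)
end

section
/- Let G = *_{l∈ℕ} G_l be a free product of infinitely many infinite groups. There is no conjugacy-invariant collection 𝓚 of infinite subgroups of G with finitely many conjugacy classes such that for every m ∈ ℕ, some member of 𝓚 is contained in Z_m = *_{l>m} G_l. -/
open scoped Pointwise

/-- The subgroup of the free product `*_{k} G k` generated by the factors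
indexed by `S`. -/
def factorJoin {ι : Type*} (G : ι → Type*) [∀ i, Group (G i)] (S : Set ι) :
    Subgroup (Monoid.CoprodI G) :=
  ⨆ k ∈ S, (Monoid.CoprodI.of (M := G) (i := k)).range

/-
Killing the factors of index `> n` is a retraction of the free product whose kernel contains
`Z_n`. Every element involves only finitely many factors, so it is fixed by this retraction once
`n` is large. Hence a nontrivial element of each of the finitely many representatives of the
conjugacy classes survives the retraction for large `n`; as the kernel is normal, no conjugate of a
representative lies in it, so none lies in `Z_n`.
-/

namespace Monoid.CoprodI

variable {ι : Type*} {G : ι → Type*} [∀ i, Group (G i)]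

def retraction (S : Set ι) [DecidablePred (· ∈ S)] : CoprodI G →* CoprodI G :=
  lift fun i => if i ∈ S then of else 1

section retraction

variable (S : Set ι) [DecidablePred (· ∈ S)]

theorem retraction_of_of_mem {i : ι} (hi : i ∈ S) (a : G i) : retraction S (of a) = of a := by
  simp [retraction, hi]

theorem retraction_of_of_notMem {i : ι} (hi : i ∉ S) (a : G i) : retraction S (of a) = 1 := by
  simp [retraction, hi]

theorem factorJoin_compl_le_ker_retraction : factorJoin G Sᶜ ≤ (retraction S).ker := by
  refine iSup₂_le fun i hi => ?_
  rintro _ ⟨a, rfl⟩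
  exact retraction_of_of_notMem S hi a

end retraction

theorem eventually_retraction_Iic_eq [SemilatticeSup ι] [Nonempty ι] [DecidableLE ι]
    (x : CoprodI G) : ∃ m, ∀ n, m ≤ n → retraction (Set.Iic n) x = x := by
  induction x using induction_on with
  | one => exact ⟨Classical.arbitrary ι, fun n _ => map_one _⟩
  | of i a => exact ⟨i, fun n hn => retraction_of_of_mem (Set.Iic n) hn a⟩
  | mul x y hx hy =>
    obtain ⟨m₁, h₁⟩ := hx
    obtain ⟨m₂, h₂⟩ := hy
    exact ⟨m₁ ⊔ m₂, fun n hn => by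
      rw [map_mul, h₁ n (le_sup_left.trans hn), h₂ n (le_sup_right.trans hn)]⟩

theorem eventually_not_le_ker_retraction_Iic [SemilatticeSup ι] [Nonempty ι] [DecidableLE ι]
    {K : Subgroup (CoprodI G)} (hK : (K : Set (CoprodI G)).Infinite) :
    ∃ m, ∀ n, m ≤ n → ¬ K ≤ (retraction (G := G) (Set.Iic n)).ker := by
  obtain ⟨x, hxK, hx⟩ := hK.exists_notMem_finite (Set.finite_singleton 1)
  obtain ⟨m, hm⟩ := eventually_retraction_Iic_eq x
  refine ⟨m, fun n hn hle => hx ?_⟩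
  rw [Set.mem_singleton_iff, ← hm n hn]
  exact hle hxK

end Monoid.CoprodI

theorem conjSub_le_iff_le_of_normal {G : Type*} [Group G] {N : Subgroup G} [N.Normal] (g : G)
    (K : Subgroup G) : conjSub g K ≤ N ↔ K ≤ N := by
  have hN : N.map (MulAut.conj g).toMonoidHom = N := Subgroup.Normal.map_conj_eq N g
  conv_rhs =>
    rw [← Subgroup.map_le_map_iff_of_injective (f := (MulAut.conj g).toMonoidHom)
      (MulAut.conj g).injective, hN]
  rfl

open Monoid.CoprodI in
theorem stmt_15_general (G : ℕ → Type*) [∀ l, Group (G l)] :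
    ¬ ∃ 𝓚 : Set (Subgroup (Monoid.CoprodI G)),
        ConjInv 𝓚 ∧
        (∀ K ∈ 𝓚, (K : Set (Monoid.CoprodI G)).Infinite) ∧
        (∃ T : Set (Subgroup (Monoid.CoprodI G)), T.Finite ∧ T ⊆ 𝓚 ∧
          ∀ K ∈ 𝓚, ∃ K' ∈ T, ∃ g : Monoid.CoprodI G, conjSub g K' = K) ∧
        ∀ m : ℕ, ∃ K ∈ 𝓚, K ≤ factorJoin G {l | m < l} := by
  rintro ⟨𝓚, -, hinf, ⟨T, hT, hT𝓚, hrep⟩, hZ⟩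
  choose! m hm using fun K' (hK' : K' ∈ T) =>
    eventually_not_le_ker_retraction_Iic (G := G) (hinf K' (hT𝓚 hK'))
  obtain ⟨M, hM⟩ := (hT.image m).bddAbove
  obtain ⟨K, hK𝓚, hKZ⟩ := hZ M
  obtain ⟨K', hK'T, g, rfl⟩ := hrep K hK𝓚
  refine hm K' hK'T M (hM ⟨K', hK'T, rfl⟩) ((conjSub_le_iff_le_of_normal g K').mp ?_)
  rw [show {l | M < l} = (Set.Iic M)ᶜ from Set.compl_Iic.symm] at hKZ
  exact hKZ.trans (factorJoin_compl_le_ker_retraction _)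

theorem stmt_15 (G : ℕ → Type*) [∀ l, Group (G l)]
    (hinf : ∀ l, (Set.univ : Set (G l)).Infinite) :
    ¬ ∃ 𝓚 : Set (Subgroup (Monoid.CoprodI G)),
        ConjInv 𝓚 ∧
        (∀ K ∈ 𝓚, (K : Set (Monoid.CoprodI G)).Infinite) ∧
        (∃ T : Set (Subgroup (Monoid.CoprodI G)), T.Finite ∧ T ⊆ 𝓚 ∧
          ∀ K ∈ 𝓚, ∃ K' ∈ T, ∃ g : Monoid.CoprodI G, conjSub g K' = K) ∧
        ∀ m : ℕ, ∃ K ∈ 𝓚, K ≤ factorJoin G {l | m < l} :=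
  stmt_15_general G
end
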